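/- arXiv:0805.4559 — 4 statements merged into one kernel-verified Lean document; each statement's English description precedes it below -/
import Mathlib

section
/- Let Γ ⊆ ℕ^n be a sub-semigroup generating a subgroup of finite index in ℤ^n, with Σ(Γ) the closed convex cone it generates, and let L ⊆ ℝ^n be a linear subspace defined over ℚ that meets the interior of Σ(Γ). Then Σ(Γ) ∩ L equals the closed convex cone generated by Γ ∩ L. -/
/-
Points of `Σ(Γ) ∩ L` are limits of points of `int Σ(Γ) ∩ L` (move along the segment towards a
point of `L ∩ int Σ(Γ)`), and, `L` being spanned by rational vectors, its rational points are
dense in it. So it suffices that every rational point `q` of `int Σ(Γ) ∩ L` has a multiple `N q`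
in `Γ`, as `N q` then lies in `Γ ∩ L`. Pick a basis `b` of `ℝⁿ` inside `Γ`. Positive rational
combinations of elements of `Γ` are dense in `Σ(Γ)`, so one of them, `p`, lies in the open set
`q - {∑ cⱼ bⱼ | all cⱼ > 0}`. Since `b` is rational, so are the coordinates of `q - p`, hence
`q = p + ∑ cⱼ bⱼ` is itself a positive rational combination of elements of `Γ`; clearing
denominators with the semigroup property gives `N q ∈ Γ`.
-/

/-- The smallest closed convex cone containing a set `S`. -/
def closedConvexConeGen {E : Type*} [AddCommMonoid E] [Module ℝ E] [TopologicalSpace E]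
    (S : Set E) : Set E :=
  ⋂₀ {C : Set E | S ⊆ C ∧ IsClosed C ∧ Convex ℝ C ∧ ∀ r : ℝ, 0 ≤ r → ∀ x ∈ C, r • x ∈ C}

open Set Filter Topology Module

section ClosedConvexConeGen

variable {E : Type*} [AddCommMonoid E] [Module ℝ E] [TopologicalSpace E] {S C : Set E}

theorem subset_closedConvexConeGen : S ⊆ closedConvexConeGen S :=
  subset_sInter fun _ hC => hC.1

theorem isClosed_closedConvexConeGen : IsClosed (closedConvexConeGen S) :=
  isClosed_sInter fun _ hC => hC.2.1

theorem convex_closedConvexConeGen : Convex ℝ (closedConvexConeGen S) :=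
  convex_sInter fun _ hC => hC.2.2.1

theorem smul_mem_closedConvexConeGen {r : ℝ} (hr : 0 ≤ r) {x : E}
    (hx : x ∈ closedConvexConeGen S) : r • x ∈ closedConvexConeGen S :=
  mem_sInter.2 fun C hC => hC.2.2.2 r hr x (mem_sInter.1 hx C hC)

theorem closedConvexConeGen_subset_of_add_mem (hSC : S ⊆ C) (hC : IsClosed C)
    (hadd : ∀ x ∈ C, ∀ y ∈ C, x + y ∈ C) (hsmul : ∀ r : ℝ, 0 ≤ r → ∀ x ∈ C, r • x ∈ C) :
    closedConvexConeGen S ⊆ C :=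
  sInter_subset_of_mem ⟨hSC, hC,
    fun _ hx _ hy a b ha hb _ => hadd _ (hsmul a ha _ hx) _ (hsmul b hb _ hy), hsmul⟩

theorem closedConvexConeGen_mono {T : Set E} (h : S ⊆ T) :
    closedConvexConeGen S ⊆ closedConvexConeGen T :=
  sInter_subset_sInter fun _ ⟨hTC, hC⟩ => ⟨h.trans hTC, hC⟩

theorem closedConvexConeGen_subset_submodule (K : Submodule ℝ E) (hK : IsClosed (K : Set E))
    (hSK : S ⊆ K) : closedConvexConeGen S ⊆ K :=
  closedConvexConeGen_subset_of_add_mem hSK hK (fun _ hx _ hy => K.add_mem hx hy)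
    (fun r _ _ hx => K.smul_mem r hx)

end ClosedConvexConeGen

section Density

variable {E : Type*} [AddCommGroup E] [Module ℝ E] [TopologicalSpace E] [ContinuousSMul ℝ E]

theorem smul_mem_closure_of_ratCast_smul_mem {A : Set E}
    (hA : ∀ q : ℚ, 0 < q → ∀ x ∈ A, (q : ℝ) • x ∈ A) {r : ℝ} (hr : 0 ≤ r) {x : E}
    (hx : x ∈ closure A) : r • x ∈ closure A := by
  have hr' : r ∈ closure (Ioi 0 ∩ range ((↑) : ℚ → ℝ)) :=
    closure_minimal (Rat.denseRange_cast.open_subset_closure_inter isOpen_Ioi) isClosed_closure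
      (by rwa [closure_Ioi])
  refine map_mem_closure₂ continuous_smul hr' hx ?_
  rintro _ ⟨hq, q, rfl⟩ y hy
  exact hA q (Rat.cast_pos.1 (mem_Ioi.1 hq)) y hy

theorem span_real_subset_closure_span_rat [Module ℚ E] [ContinuousAdd E] (s : Set E) :
    (Submodule.span ℝ s : Set E) ⊆ closure (Submodule.span ℚ s) := by
  let K : Submodule ℝ E :=
    { carrier := closure (Submodule.span ℚ s)
      add_mem' := fun hx hy =>
        map_mem_closure₂ continuous_add hx hy fun _ ha _ hb => add_mem ha hb
      zero_mem' := subset_closure (zero_mem _)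
      smul_mem' := fun c x hx => by
        have hc : c ∈ closure (range ((↑) : ℚ → ℝ)) :=
          (Rat.denseRange_cast (𝕜 := ℝ)).closure_eq ▸ mem_univ c
        refine map_mem_closure₂ continuous_smul hc hx ?_
        rintro _ ⟨q, rfl⟩ y hy
        rw [Rat.cast_smul_eq_qsmul]
        exact Submodule.smul_mem _ q hy }
  exact Submodule.span_le (p := K) |>.2 fun x hx => subset_closure (Submodule.subset_span hx)

theorem mem_closure_interior_inter [IsTopologicalAddGroup E] {C L : Set E} (hC : Convex ℝ C)
    (hL : Convex ℝ L) {u x : E} (hu : u ∈ interior C ∩ L) (hx : x ∈ C ∩ L) :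
    x ∈ closure (interior C ∩ L) :=
  closure_mono (subset_inter (hC.openSegment_interior_self_subset_interior hu.1 hx.1)
      (hL.openSegment_subset hu.2 hx.2))
    (segment_subset_closure_openSegment (right_mem_segment ℝ u x))

end Density

section RationalCone

variable {E : Type*} [AddCommGroup E] [Module ℝ E] {S : Set E}

/-- For additively closed `S`, the positive rational combinations of elements of `S`. -/
def rationalCone (S : Set E) : Set E := {x | ∃ N : ℕ, 0 < N ∧ (N : ℝ) • x ∈ S}

theorem subset_rationalCone : S ⊆ rationalCone S :=
  fun x hx => ⟨1, one_pos, by rwa [Nat.cast_one, one_smul]⟩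

theorem natCast_smul_mem_of_add_mem (hS : ∀ x ∈ S, ∀ y ∈ S, x + y ∈ S) {x : E} (hx : x ∈ S)
    {k : ℕ} (hk : 0 < k) : (k : ℝ) • x ∈ S := by
  induction k, hk using Nat.le_induction with
  | base => rwa [Nat.cast_one, one_smul]
  | succ k _ ih => rw [Nat.cast_succ, add_smul, one_smul]; exact hS _ ih _ hx

theorem add_mem_rationalCone (hS : ∀ x ∈ S, ∀ y ∈ S, x + y ∈ S) {x y : E}
    (hx : x ∈ rationalCone S) (hy : y ∈ rationalCone S) : x + y ∈ rationalCone S := by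
  obtain ⟨M, hM, hMx⟩ := hx
  obtain ⟨N, hN, hNy⟩ := hy
  refine ⟨M * N, Nat.mul_pos hM hN, ?_⟩
  have h : ((M * N : ℕ) : ℝ) • (x + y) = (N : ℝ) • ((M : ℝ) • x) + (M : ℝ) • ((N : ℝ) • y) := by
    rw [smul_smul, smul_smul, smul_add, Nat.cast_mul, mul_comm (N : ℝ)]
  rw [h]
  exact hS _ (natCast_smul_mem_of_add_mem hS hMx hN) _ (natCast_smul_mem_of_add_mem hS hNy hM)

theorem ratCast_smul_mem_rationalCone (hS : ∀ x ∈ S, ∀ y ∈ S, x + y ∈ S) {q : ℚ} (hq : 0 < q)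
    {x : E} (hx : x ∈ rationalCone S) : (q : ℝ) • x ∈ rationalCone S := by
  obtain ⟨N, hN, hNx⟩ := hx
  refine ⟨N * q.den, Nat.mul_pos hN q.den_pos, ?_⟩
  have hnum : ((q.num.natAbs : ℕ) : ℝ) = q.num := by
    rw [Nat.cast_natAbs, Int.cast_abs, abs_of_pos (by exact_mod_cast Rat.num_pos.2 hq)]
  have h : ((N * q.den : ℕ) : ℝ) • ((q : ℝ) • x) = (q.num.natAbs : ℝ) • ((N : ℝ) • x) := by
    rw [smul_smul, smul_smul, hnum, Rat.cast_def, Nat.cast_mul]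
    congr 1
    field_simp
  rw [h]
  exact natCast_smul_mem_of_add_mem hS hNx (Int.natAbs_pos.2 (Rat.num_pos.2 hq).ne')

theorem closedConvexConeGen_subset_closure_rationalCone [TopologicalSpace E] [ContinuousAdd E]
    [ContinuousSMul ℝ E] (hS : ∀ x ∈ S, ∀ y ∈ S, x + y ∈ S) :
    closedConvexConeGen S ⊆ closure (rationalCone S) :=
  closedConvexConeGen_subset_of_add_mem (subset_rationalCone.trans subset_closure)
    isClosed_closure
    (fun _ hx _ hy => map_mem_closure₂ continuous_add hx hy fun _ ha _ hb =>
      add_mem_rationalCone hS ha hb)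
    (fun _ hr _ hx => smul_mem_closure_of_ratCast_smul_mem
      (fun _ hq _ hy => ratCast_smul_mem_rationalCone hS hq hy) hr hx)

end RationalCone

noncomputable def ratPoints (ι : Type*) : Submodule ℚ (ι → ℝ) :=
  LinearMap.range ((Algebra.linearMap ℚ ℝ).compLeft ι)

section RatPoints

variable {ι : Type*}

instance [Finite ι] : FiniteDimensional ℚ (ratPoints ι) :=
  Module.Finite.range _

theorem natCast_mem_ratPoints (x : ι → ℕ) : (fun i => (x i : ℝ)) ∈ ratPoints ι :=
  ⟨fun i => (x i : ℚ), funext fun i => Rat.cast_natCast (x i)⟩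

theorem span_ratCast_subset_closure_inter_ratPoints (S : Set (ι → ℚ)) :
    (Submodule.span ℝ ((fun q : ι → ℚ => fun i => (q i : ℝ)) '' S) : Set (ι → ℝ)) ⊆
      closure (Submodule.span ℝ ((fun q : ι → ℚ => fun i => (q i : ℝ)) '' S) ∩ ratPoints ι) :=
  (span_real_subset_closure_span_rat _).trans <| closure_mono <|
    subset_inter (Submodule.span_le_restrictScalars ℚ ℝ _)
      (Submodule.span_le.2 <| by rintro _ ⟨q, -, rfl⟩; exact ⟨q, rfl⟩)

theorem rationalCone_subset_ratPoints {S : Set (ι → ℝ)} (hSQ : S ⊆ ratPoints ι) :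
    rationalCone S ⊆ ratPoints ι := by
  rintro x ⟨N, hN, hNx⟩
  rw [← Rat.cast_natCast, Rat.cast_smul_eq_qsmul] at hNx
  exact (Submodule.smul_mem_iff _ (Nat.cast_ne_zero.2 hN.ne')).1 (hSQ hNx)

variable [Fintype ι]

theorem finrank_ratPoints : finrank ℚ (ratPoints ι) = Fintype.card ι := by
  rw [ratPoints, LinearMap.finrank_range_of_inj Rat.cast_injective.comp_left,
    Module.finrank_fintype_fun_eq_card]

theorem exists_ratCast_coeffs_of_mem_ratPoints {κ : Type*} [Fintype κ] (b : Basis κ ℝ (ι → ℝ))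
    (hb : ∀ j, b j ∈ ratPoints ι) {x : ι → ℝ} (hx : x ∈ ratPoints ι) :
    ∃ d : κ → ℚ, ∑ j, (d j : ℝ) • b j = x := by
  have hspan : Submodule.span ℚ (range b) = ratPoints ι := by
    refine Submodule.eq_of_le_of_finrank_eq (Submodule.span_le.2 (range_subset_iff.2 hb)) ?_
    rw [finrank_span_eq_card (b.linearIndependent.restrict_scalars' ℚ), finrank_ratPoints,
      ← finrank_eq_card_basis b, Module.finrank_fintype_fun_eq_card]
  obtain ⟨d, hd⟩ := Submodule.mem_span_range_iff_exists_fun ℚ |>.1 (hspan ▸ hx)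
  exact ⟨d, by simpa only [Rat.cast_smul_eq_qsmul] using hd⟩

end RatPoints

section InteriorRationalPoints

variable {ι : Type*} [Fintype ι] {S : Set (ι → ℝ)}

theorem mem_rationalCone_of_basis_of_mem_interior_closure (hS : ∀ x ∈ S, ∀ y ∈ S, x + y ∈ S)
    (hSQ : S ⊆ ratPoints ι) {κ : Type*} [Fintype κ] (b : Basis κ ℝ (ι → ℝ))
    (hbS : ∀ j, b j ∈ S) {q : ι → ℝ} (hq : q ∈ ratPoints ι)
    (hqi : q ∈ interior (closure (rationalCone S))) : q ∈ rationalCone S := by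
  set A := rationalCone S
  set U := {p : ι → ℝ | ∀ j, 0 < b.coord j (q - p)}
  have hU : IsOpen U := by
    simp only [U, ofPred_forall]
    exact isOpen_iInter_of_finite fun j => isOpen_lt continuous_const
      ((b.coord j).continuous_of_finiteDimensional.comp (continuous_const.sub continuous_id))
  have hlim : Tendsto (fun t : ℝ => q - t • ∑ j, b j) (𝓝[>] 0) (𝓝 q) := by
    have h : Continuous fun t : ℝ => q - t • ∑ j, b j := by fun_prop
    simpa using h.continuousWithinAt.tendsto (x := 0) (s := Ioi 0)
  obtain ⟨t, ht, htpos⟩ :=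
    ((hlim.eventually (mem_interior_iff_mem_nhds.1 hqi)).and self_mem_nhdsWithin).exists
  have htU : q - t • ∑ j, b j ∈ U := fun j => by
    rwa [sub_sub_cancel, Finset.smul_sum, Basis.coord_apply, b.repr_sum_self]
  obtain ⟨p, hpU, hpA⟩ := mem_closure_iff.1 (show _ ∈ closure A from ht) U hU htU
  obtain ⟨d, hd⟩ := exists_ratCast_coeffs_of_mem_ratPoints b (fun j => hSQ (hbS j))
    (sub_mem hq (rationalCone_subset_ratPoints hSQ hpA))
  have hdpos : ∀ j, 0 < d j := fun j => by
    simpa only [← hd, Basis.coord_apply, b.repr_sum_self, Rat.cast_pos] using hpU j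
  rw [show q = p + ∑ j, (d j : ℝ) • b j by rw [hd]; abel]
  -- `A` need not contain `0`, so the terms of the sum are absorbed into `p` one at a time.
  refine Finset.sum_induction _ (fun z => ∀ y ∈ A, y + z ∈ A) ?_ ?_ ?_ p hpA
  · intro z w hz hw y hy
    rw [← add_assoc]
    exact hw _ (hz y hy)
  · intro y hy
    rwa [add_zero]
  · intro j _ y hy
    exact add_mem_rationalCone hS hy
      (ratCast_smul_mem_rationalCone hS (hdpos j) (subset_rationalCone (hbS j)))

theorem mem_rationalCone_of_mem_interior (hS : ∀ x ∈ S, ∀ y ∈ S, x + y ∈ S)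
    (hSQ : S ⊆ ratPoints ι) {q : ι → ℝ} (hq : q ∈ ratPoints ι)
    (hqi : q ∈ interior (closedConvexConeGen S)) : q ∈ rationalCone S := by
  have hspan : ⊤ ≤ Submodule.span ℝ S :=
    (Submodule.eq_top_of_nonempty_interior' _ ⟨q, interior_mono
      (closedConvexConeGen_subset_submodule _ (Submodule.span ℝ S).closed_of_finiteDimensional
        Submodule.subset_span) hqi⟩).ge
  let b := Basis.ofSpan hspan
  have : Fintype _ := @Fintype.ofFinite _ (Module.Finite.finite_basis b)
  exact mem_rationalCone_of_basis_of_mem_interior_closure hS hSQ b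
    (fun j => Basis.ofSpan_subset hspan ⟨j, rfl⟩) hq
    (interior_mono (closedConvexConeGen_subset_closure_rationalCone hS) hqi)

theorem mem_closedConvexConeGen_inter_of_mem_interior (Γ : Set (ι → ℕ))
    (hsemi : ∀ x ∈ Γ, ∀ y ∈ Γ, x + y ∈ Γ) (L : Submodule ℝ (ι → ℝ)) {q : ι → ℝ}
    (hq : q ∈ ratPoints ι) (hqL : q ∈ L)
    (hqi : q ∈ interior (closedConvexConeGen ((fun x : ι → ℕ => fun i => (x i : ℝ)) '' Γ))) :
    q ∈ closedConvexConeGen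
      ((fun x : ι → ℕ => fun i => (x i : ℝ)) '' {x ∈ Γ | (fun i => (x i : ℝ)) ∈ L}) := by
  set G := (fun x : ι → ℕ => fun i => (x i : ℝ)) '' Γ
  have hadd : ∀ u ∈ G, ∀ v ∈ G, u + v ∈ G := by
    rintro _ ⟨x, hx, rfl⟩ _ ⟨y, hy, rfl⟩
    exact ⟨x + y, hsemi x hx y hy, funext fun i => Nat.cast_add (x i) (y i)⟩
  obtain ⟨N, hN, w, hwΓ, hw⟩ := mem_rationalCone_of_mem_interior hadd
    (by rintro _ ⟨x, -, rfl⟩; exact natCast_mem_ratPoints x) hq hqi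
  beta_reduce at hw
  have hwL : (fun i => (w i : ℝ)) ∈ L := hw ▸ L.smul_mem _ hqL
  rw [← inv_smul_smul₀ (Nat.cast_ne_zero.2 hN.ne' : (N : ℝ) ≠ 0) q, ← hw]
  exact smul_mem_closedConvexConeGen (by positivity)
    (subset_closedConvexConeGen ⟨w, ⟨hwΓ, hwL⟩, rfl⟩)

end InteriorRationalPoints

theorem cone_meets_rational_subspace_general
    (n : ℕ) (Γ : Set (Fin n → ℕ))
    (hsemi : ∀ x ∈ Γ, ∀ y ∈ Γ, x + y ∈ Γ)
    (L : Submodule ℝ (Fin n → ℝ))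
    (hQ : ∃ S : Set (Fin n → ℚ),
      L = Submodule.span ℝ ((fun q : Fin n → ℚ => ((fun i => (q i : ℝ)) : Fin n → ℝ)) '' S))
    (hmeet : ((L : Set (Fin n → ℝ)) ∩ interior (closedConvexConeGen
        ((fun x : Fin n → ℕ => ((fun i => (x i : ℝ)) : Fin n → ℝ)) '' Γ))).Nonempty) :
    closedConvexConeGen ((fun x : Fin n → ℕ => ((fun i => (x i : ℝ)) : Fin n → ℝ)) '' Γ)
        ∩ (L : Set (Fin n → ℝ))
      = closedConvexConeGen
          ((fun x : Fin n → ℕ => ((fun i => (x i : ℝ)) : Fin n → ℝ)) ''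
            {x ∈ Γ | ((fun i => (x i : ℝ)) : Fin n → ℝ) ∈ L}) := by
  obtain ⟨S, hS⟩ := hQ
  obtain ⟨u, huL, huC⟩ := hmeet
  set C := closedConvexConeGen ((fun x : Fin n → ℕ => ((fun i => (x i : ℝ)) : Fin n → ℝ)) '' Γ)
  have hdense : (L : Set (Fin n → ℝ)) ⊆ closure (L ∩ ratPoints (Fin n)) :=
    hS ▸ span_ratCast_subset_closure_inter_ratPoints S
  refine subset_antisymm (fun x hx => ?_) (subset_inter
    (closedConvexConeGen_mono (image_mono (sep_subset _ _)))
    (closedConvexConeGen_subset_submodule L L.closed_of_finiteDimensional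
      (by rintro _ ⟨_, ⟨-, hxL⟩, rfl⟩; exact hxL)))
  have hx' : x ∈ closure (interior C ∩ L) :=
    mem_closure_interior_inter convex_closedConvexConeGen L.convex ⟨huC, huL⟩ hx
  have hrat : interior C ∩ L ⊆ closure (interior C ∩ (L ∩ ratPoints (Fin n))) :=
    (inter_subset_inter_right _ hdense).trans isOpen_interior.inter_closure
  refine closure_minimal ?_ isClosed_closedConvexConeGen
    (closure_minimal hrat isClosed_closure hx')
  rintro q ⟨hqi, hqL, hq⟩
  exact mem_closedConvexConeGen_inter_of_mem_interior Γ hsemi L hq hqL hqi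

/-- Let `Γ ⊆ ℕ^n` be a sub-semigroup generating a subgroup of finite index
in `ℤ^n`, let `Σ(Γ)` be the closed convex cone it generates, and let `L ⊆ ℝ^n` be a
linear subspace defined over `ℚ` meeting the interior of `Σ(Γ)`.
Then `Σ(Γ) ∩ L` equals the closed convex cone generated by `Γ ∩ L`. -/
theorem cone_meets_rational_subspace
    (n : ℕ) (Γ : Set (Fin n → ℕ))
    (hsemi : ∀ x ∈ Γ, ∀ y ∈ Γ, x + y ∈ Γ)
    (hfin : (AddSubgroup.closure
        ((fun x : Fin n → ℕ => ((fun i => (x i : ℤ)) : Fin n → ℤ)) '' Γ)).index ≠ 0)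
    (L : Submodule ℝ (Fin n → ℝ))
    (hQ : ∃ S : Set (Fin n → ℚ),
      L = Submodule.span ℝ ((fun q : Fin n → ℚ => ((fun i => (q i : ℝ)) : Fin n → ℝ)) '' S))
    (hmeet : ((L : Set (Fin n → ℝ)) ∩ interior (closedConvexConeGen
        ((fun x : Fin n → ℕ => ((fun i => (x i : ℝ)) : Fin n → ℝ)) '' Γ))).Nonempty) :
    closedConvexConeGen ((fun x : Fin n → ℕ => ((fun i => (x i : ℝ)) : Fin n → ℝ)) '' Γ)
        ∩ (L : Set (Fin n → ℝ))
      = closedConvexConeGen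
          ((fun x : Fin n → ℕ => ((fun i => (x i : ℝ)) : Fin n → ℝ)) ''
            {x ∈ Γ | ((fun i => (x i : ℝ)) : Fin n → ℝ) ∈ L}) :=
  cone_meets_rational_subspace_general n Γ hsemi L hQ hmeet
end

section
/- Let Σ ⊆ ℝ^n be a full-dimensional cone written as the closure of an increasing union of closed convex cones Σ¹ ⊆ Σ² ⊆ ⋯. Then the interior of Σ equals the union of the interiors of the Σⁱ, provided each Σⁱ is a closed convex cone and Σ = closure(⋃ᵢ Σⁱ). -/
/-!
A neighbourhood of an interior point of a convex set `T` in finite dimension contains a simplex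
around that point. If `T` is a directed union of convex sets, the finitely many vertices of the
simplex already lie in one member of the family, and so does the simplex. Passing from `Σ` to the
union itself costs nothing, since in finite dimension a convex set and its closure have the same
interior.
-/

open Set

variable {E : Type*} [NormedAddCommGroup E] [NormedSpace ℝ E] [FiniteDimensional ℝ E]

theorem Convex.interior_closure_eq_interior {s : Set E} (hs : Convex ℝ s) :
    interior (closure s) = interior s := by
  rcases (interior (closure s)).eq_empty_or_nonempty with h | h
  · rw [h, eq_comm, ← subset_empty_iff, ← h]
    exact interior_mono subset_closure
  · refine hs.interior_closure_eq_interior_of_nonempty_interior ?_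
    rw [hs.interior_nonempty_iff_affineSpan_eq_top, eq_top_iff,
      ← hs.closure.interior_nonempty_iff_affineSpan_eq_top.1 h]
    exact affineSpan_le.2 <|
      closure_minimal (subset_affineSpan ℝ s) (affineSpan ℝ s).closed_of_finiteDimensional

theorem Directed.interior_iUnion_eq_iUnion_interior {ι : Type*} [Nonempty ι] {S : ι → Set E}
    (hdir : Directed (· ⊆ ·) S) (hconv : ∀ i, Convex ℝ (S i)) :
    interior (⋃ i, S i) = ⋃ i, interior (S i) := by
  classical
  refine subset_antisymm (fun x hx => ?_) (iUnion_subset fun i => interior_mono (subset_iUnion S i))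
  obtain ⟨b, hx_simplex, hsimplex⟩ :=
    exists_mem_interior_convexHull_affineBasis (mem_interior_iff_mem_nhds.1 hx)
  obtain ⟨i, hi⟩ := hdir.exists_mem_subset_of_finset_subset_biUnion (s := Finset.univ.image b)
    (by simpa using (subset_convexHull ℝ _).trans hsimplex)
  exact mem_iUnion.2
    ⟨i, interior_mono (convexHull_min (by simpa using hi) (hconv i)) hx_simplex⟩

theorem interior_closure_iUnion_of_cones_general
    (n : ℕ) (S : ℕ → Set (Fin n → ℝ))
    (hmono : Monotone S)
    (hconv : ∀ i, Convex ℝ (S i)) :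
    interior (closure (⋃ i, S i)) = ⋃ i, interior (S i) := by
  rw [(hmono.directed_le.convex_iUnion hconv).interior_closure_eq_interior]
  exact hmono.directed_le.interior_iUnion_eq_iUnion_interior hconv

/-- If `Σ¹ ⊆ Σ² ⊆ ⋯` is an increasing sequence of closed convex cones in
`ℝ^n` and `Σ` is the closure of their union, then `int(Σ) = ⋃ᵢ int(Σⁱ)`. -/
theorem interior_closure_iUnion_of_cones
    (n : ℕ) (S : ℕ → Set (Fin n → ℝ))
    (hmono : Monotone S)
    (hclosed : ∀ i, IsClosed (S i))
    (hconv : ∀ i, Convex ℝ (S i))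
    (hcone : ∀ i, ∀ r : ℝ, 0 ≤ r → ∀ x ∈ S i, r • x ∈ S i) :
    interior (closure (⋃ i, S i)) = ⋃ i, interior (S i) :=
  interior_closure_iUnion_of_cones_general n S hmono hconv
end

section
/- Let Γ ⊆ ℕ^k be a finitely generated semigroup generating ℤ^k as a group, and let Σ ⊆ ℝ^k be the closed convex cone it spans. Then there exists z ∈ Γ such that every integer vector in the translated cone z + Σ belongs to Γ, i.e. (z + Σ) ∩ ℤ^k ⊆ Γ. -/
/-!
Write `Γ` as the monoid generated by a finite set `s`. A finitely generated cone is closed (by the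
conic Carathéodory theorem it is a finite union of images of orthants under injective linear
maps), so `Σ` is the cone of nonnegative real combinations of `s`. Rounding the coefficients down
splits every integer point of `Σ` into a point of `Γ` plus an integer point of the zonotope
`∑_{a ∈ s} [0, 1] • a`, and there are only finitely many of those. As `Γ - Γ = ℤ^k`, each such
point `d` has some `c_d ∈ Γ` with `d + c_d ∈ Γ`, and `z = ∑_d c_d` works for all of them at once.
-/

open Set

namespace PointedCone

variable {α E : Type*} [AddCommGroup E] [Module ℝ E]

lemma mem_hull_image_finset_iff {v : α → E} {t : Finset α} {x : E} :
    x ∈ hull ℝ (v '' t) ↔ ∃ f : α → ℝ, (∀ a ∈ t, 0 ≤ f a) ∧ ∑ a ∈ t, f a • v a = x := by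
  constructor
  · intro hx
    obtain ⟨c, rfl⟩ := (Submodule.mem_span_image_finset_iff_exists_fun' _).1 hx
    exact ⟨fun a => c a, fun a _ => (c a).2, rfl⟩
  · rintro ⟨f, hf, rfl⟩
    exact Submodule.sum_mem _ fun a ha =>
      smul_mem _ (hf a ha) (subset_hull (mem_image_of_mem v ha))

lemma exists_mem_hull_image_erase [DecidableEq α] {v : α → E} {t : Finset α}
    (ht : ¬ LinearIndepOn ℝ v (t : Set α)) {x : E} (hx : x ∈ hull ℝ (v '' t)) :
    ∃ y ∈ t, x ∈ hull ℝ (v '' ↑(t.erase y)) := by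
  obtain ⟨f, hf, rfl⟩ := mem_hull_image_finset_iff.1 hx
  obtain ⟨g, hg, hpos⟩ : ∃ g : α → ℝ, ∑ a ∈ t, g a • v a = 0 ∧ ∃ a ∈ t, 0 < g a := by
    obtain ⟨g, hg, a, ha, hga⟩ := not_linearIndepOn_finset_iff.1 ht
    rcases hga.lt_or_gt with hneg | hpos
    · exact ⟨-g, by simp [neg_smul, hg], a, ha, by simpa using hneg⟩
    · exact ⟨g, hg, a, ha, hpos⟩
  -- Subtract the largest multiple of the relation `g` that keeps all coefficients nonnegative.
  obtain ⟨y, hy, hmin⟩ := {a ∈ t | 0 < g a}.exists_min_image (fun a => f a / g a)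
    (by simpa [Finset.Nonempty] using hpos)
  rw [Finset.mem_filter] at hy
  set l := f y / g y
  refine ⟨y, hy.1, mem_hull_image_finset_iff.2 ⟨fun a => f a - l * g a, fun a ha => ?_, ?_⟩⟩
  · have ha := Finset.mem_of_mem_erase ha
    rcases le_or_gt (g a) 0 with hga | hga
    · have : 0 ≤ l := div_nonneg (hf y hy.1) hy.2.le
      nlinarith [hf a ha]
    · have := hmin a (Finset.mem_filter.2 ⟨ha, hga⟩)
      rw [le_div_iff₀ hga] at this
      linarith
  · calc ∑ a ∈ t.erase y, (f a - l * g a) • v a = ∑ a ∈ t, (f a - l * g a) • v a :=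
          Finset.sum_erase _ (by simp [l, hy.2.ne'])
      _ = ∑ a ∈ t, f a • v a := by
          simp only [sub_smul, mul_smul, Finset.sum_sub_distrib, ← Finset.smul_sum, hg, smul_zero,
            sub_zero]

lemma exists_linearIndepOn_subset_mem_hull_image {v : α → E} (t : Finset α) {x : E}
    (hx : x ∈ hull ℝ (v '' t)) :
    ∃ u ⊆ t, LinearIndepOn ℝ v (u : Set α) ∧ x ∈ hull ℝ (v '' u) := by
  classical
  induction t using Finset.strongInduction with
  | H t ih =>
    by_cases ht : LinearIndepOn ℝ v (t : Set α)
    · exact ⟨t, subset_rfl, ht, hx⟩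
    · obtain ⟨y, hy, hxy⟩ := exists_mem_hull_image_erase ht hx
      obtain ⟨u, hu, hli, hxu⟩ := ih _ (Finset.erase_ssubset hy) hxy
      exact ⟨u, hu.trans (Finset.erase_subset _ _), hli, hxu⟩

variable [TopologicalSpace E] [IsTopologicalAddGroup E] [ContinuousSMul ℝ E] [T2Space E]

lemma isClosed_hull_image_of_linearIndepOn {v : α → E} {u : Finset α}
    (hu : LinearIndepOn ℝ v (u : Set α)) : IsClosed (hull ℝ (v '' u) : Set E) := by
  let L := Fintype.linearCombination ℝ (fun a : u => v a)
  have hL : Topology.IsClosedEmbedding L := LinearMap.isClosedEmbedding_of_injective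
    (LinearMap.ker_eq_bot.2 hu.fintypeLinearCombination_injective)
  have : (hull ℝ (v '' u) : Set E) = L '' Ici 0 := by
    refine Subset.antisymm ?_ ?_
    · rintro x hx
      obtain ⟨f, hf, rfl⟩ := mem_hull_image_finset_iff.1 hx
      exact ⟨fun a => f a, fun a => hf a a.2, by
        simpa [L, Fintype.linearCombination_apply] using Finset.sum_attach u (fun a => f a • v a)⟩
    · rintro _ ⟨f, hf, rfl⟩
      simp only [L, Fintype.linearCombination_apply]
      exact Submodule.sum_mem _ fun a _ =>
        smul_mem _ (hf a) (subset_hull (mem_image_of_mem v a.2))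
  rw [this]
  exact hL.isClosedMap _ isClosed_Ici

theorem isClosed_hull_image_finset (v : α → E) (t : Finset α) :
    IsClosed (hull ℝ (v '' t) : Set E) := by
  classical
  have : (hull ℝ (v '' t) : Set E) =
      ⋃ u ∈ {u : Finset α | u ⊆ t ∧ LinearIndepOn ℝ v (u : Set α)}, hull ℝ (v '' u) := by
    refine Subset.antisymm (fun x hx => ?_) (iUnion₂_subset fun u hu => ?_)
    · obtain ⟨u, hut, hu, hxu⟩ := exists_linearIndepOn_subset_mem_hull_image t hx
      exact mem_biUnion ⟨hut, hu⟩ hxu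
    · exact Submodule.span_mono (image_mono (Finset.coe_subset.2 hu.1))
  rw [this]
  exact (t.powerset.finite_toSet.subset fun u hu => Finset.mem_powerset.2 hu.1).isClosed_biUnion
    fun u hu => isClosed_hull_image_of_linearIndepOn hu.2

end PointedCone

lemma closedConvexConeGen_subset {E : Type*} [AddCommMonoid E] [Module ℝ E] [TopologicalSpace E]
    {S : Set E} {C : PointedCone ℝ E} (hC : IsClosed (C : Set E)) (hSC : S ⊆ C) :
    closedConvexConeGen S ⊆ C :=
  sInter_subset_of_mem ⟨hSC, hC, C.convex, fun _ hr _ hx => C.smul_mem hr hx⟩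

lemma AddMonoidHom.image_addSubmonoidClosure_subset_hull {A E : Type*} [AddCommMonoid A]
    [AddCommGroup E] [Module ℝ E] (f : A →+ E) (s : Set A) :
    f '' AddSubmonoid.closure s ⊆ PointedCone.hull ℝ (f '' s) := by
  rw [← AddSubmonoid.coe_map, AddMonoidHom.map_mclosure]
  exact AddSubmonoid.closure_le (S := (PointedCone.hull ℝ (f '' s)).toAddSubmonoid) |>.2
    PointedCone.subset_hull

namespace AddSubmonoid

variable {G : Type*} [AddCommGroup G] {M : AddSubmonoid G}

theorem exists_add_mem_of_mem_addSubgroupClosure {d : G}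
    (hd : d ∈ AddSubgroup.closure (M : Set G)) : ∃ c ∈ M, d + c ∈ M := by
  induction hd using AddSubgroup.closure_induction with
  | mem d hd => exact ⟨0, M.zero_mem, by simpa using hd⟩
  | zero => exact ⟨0, M.zero_mem, by simp⟩
  | add x y _ _ hx hy =>
    obtain ⟨c, hc, hxc⟩ := hx
    obtain ⟨c', hc', hyc'⟩ := hy
    exact ⟨c + c', add_mem hc hc', add_add_add_comm x y c c' ▸ add_mem hxc hyc'⟩
  | neg x _ hx =>
    obtain ⟨c, hc, hxc⟩ := hx
    exact ⟨x + c, hxc, by simpa using hc⟩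

theorem exists_forall_add_mem_of_addSubgroupClosure_eq_top
    (hM : AddSubgroup.closure (M : Set G) = ⊤) (F : Finset G) :
    ∃ c ∈ M, ∀ d ∈ F, d + c ∈ M := by
  classical
  choose c hcM hc using fun d =>
    exists_add_mem_of_mem_addSubgroupClosure (d := d) (hM ▸ AddSubgroup.mem_top d)
  refine ⟨∑ d ∈ F, c d, M.sum_mem fun d _ => hcM d, fun d hd => ?_⟩
  rw [← Finset.add_sum_erase F c hd, ← add_assoc]
  exact add_mem (hc d) (M.sum_mem fun e _ => hcM e)

end AddSubmonoid

section Zonotope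

variable {α ι : Type*}

def zonotopeIntPoints (u : α → ι → ℤ) (t : Finset α) : Set (ι → ℤ) :=
  {d | ∃ f : α → ℝ, (∀ a ∈ t, f a ∈ Icc 0 1) ∧
    ∑ a ∈ t, f a • (fun i => (u a i : ℝ)) = fun i => (d i : ℝ)}

lemma finite_zonotopeIntPoints [Finite ι] (u : α → ι → ℤ) (t : Finset α) :
    (zonotopeIntPoints u t).Finite := by
  let L := Fintype.linearCombination ℝ (fun a : t => fun i => (u a i : ℝ))
  have hK : IsCompact (L '' Icc 0 1) := isCompact_Icc.image L.continuous_of_finiteDimensional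
  have hcast : Topology.IsClosedEmbedding (fun d : ι → ℤ => fun i => (d i : ℝ)) :=
    Topology.IsClosedEmbedding.piMap fun _ => Int.isClosedEmbedding_coe_real
  refine (hcast.isCompact_preimage hK).finite_of_discrete.subset ?_
  rintro d ⟨f, hf, hd⟩
  refine ⟨fun a => f a, ⟨fun a => (hf a a.2).1, fun a => (hf a a.2).2⟩, ?_⟩
  simpa [L, Fintype.linearCombination_apply, hd] using
    Finset.sum_attach t (fun a => f a • fun i => (u a i : ℝ))

lemma exists_sub_sum_nsmul_mem_zonotopeIntPoints {u : α → ι → ℤ} {t : Finset α} {w : ι → ℤ}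
    (hw : (fun i => (w i : ℝ)) ∈ PointedCone.hull ℝ ((fun a i => (u a i : ℝ)) '' t)) :
    ∃ n : α → ℕ, w - ∑ a ∈ t, n a • u a ∈ zonotopeIntPoints u t := by
  obtain ⟨f, hf, hw⟩ := PointedCone.mem_hull_image_finset_iff.1 hw
  refine ⟨fun a => ⌊f a⌋₊, fun a => f a - ⌊f a⌋₊, fun a ha =>
    ⟨sub_nonneg.2 (Nat.floor_le (hf a ha)), by linarith [Nat.lt_floor_add_one (f a)]⟩, ?_⟩
  funext i
  have hwi := congrFun hw i
  simp only [Finset.sum_apply, Pi.smul_apply, smul_eq_mul] at hwi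
  simp [Finset.sum_apply, sub_mul, Finset.sum_sub_distrib, ← hwi]

end Zonotope

/-- Khovanskii: Let `Γ ⊆ ℕ^k` be a finitely generated semigroup generating
`ℤ^k` as a group, and `Σ` the closed convex cone it spans.  Then there is `z ∈ Γ` such
that every integer vector in the translated cone `z + Σ` belongs to `Γ`. -/
theorem khovanskii_translated_cone_in_semigroup
    (k : ℕ) (Γ : Set (Fin k → ℕ))
    (hfg : ∃ s : Finset (Fin k → ℕ),
      Γ = (AddSubmonoid.closure (s : Set (Fin k → ℕ)) : Set (Fin k → ℕ)))
    (hgen : AddSubgroup.closure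
        ((fun x : Fin k → ℕ => ((fun i => (x i : ℤ)) : Fin k → ℤ)) '' Γ) = ⊤) :
    ∃ z ∈ Γ, ∀ w : Fin k → ℤ,
      (((fun i => (w i : ℝ)) - (fun i => (z i : ℝ)) : Fin k → ℝ) ∈
        closedConvexConeGen ((fun x : Fin k → ℕ => ((fun i => (x i : ℝ)) : Fin k → ℝ)) '' Γ)) →
      ∃ g ∈ Γ, ∀ i, (g i : ℤ) = w i := by
  obtain ⟨s, rfl⟩ := hfg
  let φ : (Fin k → ℕ) →+ (Fin k → ℤ) := (Nat.castAddMonoidHom ℤ).compLeft (Fin k)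
  let ψ : (Fin k → ℕ) →+ (Fin k → ℝ) := (Nat.castAddMonoidHom ℝ).compLeft (Fin k)
  let M := (AddSubmonoid.closure (s : Set (Fin k → ℕ))).map φ
  obtain ⟨_, ⟨z, hz, rfl⟩, hzM⟩ :=
    AddSubmonoid.exists_forall_add_mem_of_addSubgroupClosure_eq_top (M := M) hgen
      (finite_zonotopeIntPoints φ s).toFinset
  refine ⟨z, hz, fun w hw => ?_⟩
  have hψ : (fun a i => ((φ a i : ℤ) : ℝ)) = ψ := by ext; simp [φ, ψ]
  have hcone :
      (fun i => ((w - φ z) i : ℝ)) ∈ PointedCone.hull ℝ ((fun a i => (φ a i : ℝ)) '' s) := by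
    have hwz : (fun i => ((w - φ z) i : ℝ)) = (fun i => (w i : ℝ)) - fun i => (z i : ℝ) := by
      ext; simp [φ]
    rw [hψ, hwz]
    exact closedConvexConeGen_subset (PointedCone.isClosed_hull_image_finset _ s)
      (ψ.image_addSubmonoidClosure_subset_hull _) hw
  obtain ⟨n, hn⟩ := exists_sub_sum_nsmul_mem_zonotopeIntPoints hcone
  have hp : ∑ a ∈ s, n a • φ a ∈ M :=
    M.sum_mem fun a ha =>
      M.nsmul_mem (AddSubmonoid.mem_map_of_mem φ (AddSubmonoid.subset_closure ha)) _
  obtain ⟨g, hg, hgw⟩ : w ∈ M := by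
    have := add_mem (hzM _ ((finite_zonotopeIntPoints φ s).mem_toFinset.2 hn)) hp
    rwa [sub_right_comm, sub_add_cancel, sub_add_cancel] at this
  exact ⟨g, hg, congrFun hgw⟩
end

section
/- Let Γ ⊆ ℕ^{d+1} be a sub-semigroup that generates ℤ^{d+1} as a group. Then for all sufficiently large m, the slice Γ_m = {x ∈ ℕ^d : (x,m) ∈ Γ} generates ℤ^d as a group. -/
lemma diff_rep {A : Type*} [AddCommGroup A] (S : Set A)
    (hS : ∀ x ∈ S, ∀ y ∈ S, x + y ∈ S) :
    ∀ g ∈ AddSubgroup.closure S,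
      ∃ a b, (a ∈ S ∨ a = 0) ∧ (b ∈ S ∨ b = 0) ∧ g = a - b := by
  have hadd : ∀ x, (x ∈ S ∨ x = 0) → ∀ y, (y ∈ S ∨ y = 0) → (x + y ∈ S ∨ x + y = 0) := by
    rintro x (hx | rfl) y (hy | rfl)
    · exact Or.inl (hS x hx y hy)
    · simpa using Or.inl hx
    · simpa using Or.inl hy
    · simp
  let D : AddSubgroup A :=
    { carrier := {g | ∃ a b, (a ∈ S ∨ a = 0) ∧ (b ∈ S ∨ b = 0) ∧ g = a - b}
      zero_mem' := ⟨0, 0, Or.inr rfl, Or.inr rfl, by simp⟩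
      add_mem' := by
        rintro x y ⟨a, b, ha, hb, rfl⟩ ⟨c, e, hc, he, rfl⟩
        exact ⟨a + c, b + e, hadd a ha c hc, hadd b hb e he, by abel⟩
      neg_mem' := by
        rintro x ⟨a, b, ha, hb, rfl⟩
        exact ⟨b, a, hb, ha, by abel⟩ }
  have hle : AddSubgroup.closure S ≤ D :=
    (AddSubgroup.closure_le D).2 fun x hx => ⟨x, 0, Or.inl hx, Or.inr rfl, by simp⟩
  exact fun g hg => hle hg

lemma numerical (b n : ℕ) (h : b * b ≤ n) : ∃ α β : ℕ, α * b + β * (b + 1) = n := by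
  rcases Nat.eq_zero_or_pos b with rfl | hb
  · exact ⟨0, n, by omega⟩
  · set q := n / b with hq
    set r := n % b with hr
    have h1 : r < b := Nat.mod_lt _ hb
    have h2 : b ≤ q := (Nat.le_div_iff_mul_le hb).2 h
    have h3 : b * q + r = n := Nat.div_add_mod n b
    have hrq : r ≤ q := le_trans h1.le h2
    refine ⟨q - r, r, ?_⟩
    have h3' : (b : ℤ) * q + r = n := by exact_mod_cast h3
    zify [hrq]
    nlinarith [h3']

/-- If a sub-semigroup `Γ ⊆ ℕ^{d+1}` generates `ℤ^{d+1}` as a group,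
then for all sufficiently large `m`, the slice `Γ_m = {x ∈ ℕ^d : (x,m) ∈ Γ}` generates
`ℤ^d` as a group. -/
theorem slices_eventually_generate
    (d : ℕ) (Γ : Set ((Fin d → ℕ) × ℕ))
    (hsemi : ∀ x ∈ Γ, ∀ y ∈ Γ, x + y ∈ Γ)
    (hgen : AddSubgroup.closure
        ((fun p : (Fin d → ℕ) × ℕ => ((fun i => (p.1 i : ℤ), (p.2 : ℤ)) :
          (Fin d → ℤ) × ℤ)) '' Γ) = ⊤) :
    ∃ M : ℕ, ∀ m ≥ M,
      AddSubgroup.closure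
          ((fun x : Fin d → ℕ => ((fun i => (x i : ℤ)) : Fin d → ℤ)) ''
            {x : Fin d → ℕ | (x, m) ∈ Γ}) = ⊤ := by
  set f : (Fin d → ℕ) × ℕ → (Fin d → ℤ) × ℤ :=
    fun p => ((fun i => (p.1 i : ℤ), (p.2 : ℤ))) with hf
  have hfadd : ∀ x y, f (x + y) = f x + f y := by
    intro x y
    refine Prod.ext ?_ ?_
    · funext j; simp [hf]
    · simp [hf]
  have hf0 : f 0 = 0 := by
    refine Prod.ext ?_ ?_
    · funext j; simp [hf]
    · simp [hf]
  -- closedness of f '' Γ under addition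
  have hSadd : ∀ x ∈ f '' Γ, ∀ y ∈ f '' Γ, x + y ∈ f '' Γ := by
    rintro _ ⟨x, hx, rfl⟩ _ ⟨y, hy, rfl⟩
    exact ⟨x + y, hsemi x hx y hy, (hfadd x y)⟩
  -- lifting: elements of (f '' Γ) ∪ {0} come from Γ ∪ {0}
  have hlift : ∀ s : (Fin d → ℤ) × ℤ, (s ∈ f '' Γ ∨ s = 0) →
      ∃ a, (a ∈ Γ ∨ a = 0) ∧ s = f a := by
    rintro s (⟨a, ha, rfl⟩ | rfl)
    · exact ⟨a, Or.inl ha, rfl⟩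
    · exact ⟨0, Or.inr rfl, hf0.symm⟩
  -- Γ₀ := Γ ∪ {0} is closed under addition and ℕ-smul
  have hadd₀ : ∀ x, (x ∈ Γ ∨ x = 0) → ∀ y, (y ∈ Γ ∨ y = 0) → (x + y ∈ Γ ∨ x + y = 0) := by
    rintro x (hx | rfl) y (hy | rfl)
    · exact Or.inl (hsemi x hx y hy)
    · simpa using Or.inl hx
    · simpa using Or.inl hy
    · simp
  have hsmul₀ : ∀ x, (x ∈ Γ ∨ x = 0) → ∀ n : ℕ, (n • x ∈ Γ ∨ n • x = 0) := by
    intro x hx n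
    induction n with
    | zero => simp
    | succ n ih =>
      have : (n + 1) • x = n • x + x := by rw [add_smul, one_smul]
      rw [this]
      exact hadd₀ _ ih _ hx
  -- extract witnesses for basis vectors
  have hbasis : ∀ i : Fin d, ∃ a b : (Fin d → ℕ) × ℕ,
      (a ∈ Γ ∨ a = 0) ∧ (b ∈ Γ ∨ b = 0) ∧
      ((Pi.single i 1 : Fin d → ℤ), (0 : ℤ)) = f a - f b := by
    intro i
    have hmem : ((Pi.single i 1 : Fin d → ℤ), (0 : ℤ)) ∈ AddSubgroup.closure (f '' Γ) := by
      rw [hgen]; trivial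
    obtain ⟨s, t, hs, ht, heq⟩ := diff_rep _ hSadd _ hmem
    obtain ⟨a, ha, rfl⟩ := hlift s hs
    obtain ⟨b, hb, rfl⟩ := hlift t ht
    exact ⟨a, b, ha, hb, heq⟩
  choose a b ha hb hab using hbasis
  -- extract witness for (0,1)
  obtain ⟨c, e, hc, he, hce⟩ : ∃ c e : (Fin d → ℕ) × ℕ,
      (c ∈ Γ ∨ c = 0) ∧ (e ∈ Γ ∨ e = 0) ∧
      ((0 : Fin d → ℤ), (1 : ℤ)) = f c - f e := by
    have hmem : ((0 : Fin d → ℤ), (1 : ℤ)) ∈ AddSubgroup.closure (f '' Γ) := by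
      rw [hgen]; trivial
    obtain ⟨s, t, hs, ht, heq⟩ := diff_rep _ hSadd _ hmem
    obtain ⟨c, hc, rfl⟩ := hlift s hs
    obtain ⟨e, he, rfl⟩ := hlift t ht
    exact ⟨c, e, hc, he, heq⟩
  -- second coordinates
  have hab2 : ∀ i, (a i).2 = (b i).2 := by
    intro i
    have := congrArg Prod.snd (hab i)
    simp [hf] at this
    omega
  have hce2 : c.2 = e.2 + 1 := by
    have := congrArg Prod.snd hce
    simp [hf] at this
    omega
  -- first coordinates of basis witnesses
  have hab1 : ∀ i j, ((a i).1 j : ℤ) - ((b i).1 j : ℤ) = (Pi.single i 1 : Fin d → ℤ) j := by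
    intro i j
    have := congrArg (fun p => p.1 j) (hab i)
    simpa [hf] using this.symm
  set B := e.2 with hB
  set K := (Finset.univ : Finset (Fin d)).sup (fun i => (a i).2) with hK
  refine ⟨B * B + K + 1, fun m hm => ?_⟩
  -- show every Pi.single i 1 is in the slice closure
  have hsingle : ∀ i : Fin d, (Pi.single i 1 : Fin d → ℤ) ∈
      AddSubgroup.closure
        ((fun x : Fin d → ℕ => ((fun i => (x i : ℤ)) : Fin d → ℤ)) ''
          {x : Fin d → ℕ | (x, m) ∈ Γ}) := by
    intro i
    have hKi : (a i).2 ≤ K := Finset.le_sup (f := fun i => (a i).2) (Finset.mem_univ i)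
    have hn : B * B ≤ m - (a i).2 := by omega
    obtain ⟨α, β, hαβ⟩ := numerical B (m - (a i).2) hn
    set w := α • e + β • c with hw
    have hwΓ : w ∈ Γ ∨ w = 0 := hadd₀ _ (hsmul₀ e he α) _ (hsmul₀ c hc β)
    have hw2 : w.2 = m - (a i).2 := by
      have h1 : w.2 = α * e.2 + β * c.2 := by
        simp [hw, smul_eq_mul]
      rw [h1, hce2, ← hB]
      exact hαβ
    -- the two slice elements
    have hpΓ : a i + w ∈ Γ := by
      rcases hadd₀ _ (ha i) _ hwΓ with h | h
      · exact h
      · exfalso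
        have h2 : (a i).2 + w.2 = 0 := congrArg Prod.snd h
        omega
    have hqΓ : b i + w ∈ Γ := by
      rcases hadd₀ _ (hb i) _ hwΓ with h | h
      · exact h
      · exfalso
        have h2 : (b i).2 + w.2 = 0 := congrArg Prod.snd h
        have := hab2 i
        omega
    have hp2 : (a i + w).2 = m := by
      have : (a i + w).2 = (a i).2 + w.2 := rfl
      omega
    have hq2 : (b i + w).2 = m := by
      have : (b i + w).2 = (b i).2 + w.2 := rfl
      have := hab2 i
      omega
    have hpmem : (a i + w).1 ∈ {x : Fin d → ℕ | (x, m) ∈ Γ} := by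
      show ((a i + w).1, m) ∈ Γ
      have : ((a i + w).1, m) = a i + w := by
        refine Prod.ext rfl hp2.symm
      rw [this]; exact hpΓ
    have hqmem : (b i + w).1 ∈ {x : Fin d → ℕ | (x, m) ∈ Γ} := by
      show ((b i + w).1, m) ∈ Γ
      have : ((b i + w).1, m) = b i + w := by
        refine Prod.ext rfl hq2.symm
      rw [this]; exact hqΓ
    have h1 : (fun j => (((a i + w).1 j : ℤ))) ∈ AddSubgroup.closure
        ((fun x : Fin d → ℕ => ((fun i => (x i : ℤ)) : Fin d → ℤ)) ''
          {x : Fin d → ℕ | (x, m) ∈ Γ}) :=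
      AddSubgroup.subset_closure ⟨_, hpmem, rfl⟩
    have h2 : (fun j => (((b i + w).1 j : ℤ))) ∈ AddSubgroup.closure
        ((fun x : Fin d → ℕ => ((fun i => (x i : ℤ)) : Fin d → ℤ)) ''
          {x : Fin d → ℕ | (x, m) ∈ Γ}) :=
      AddSubgroup.subset_closure ⟨_, hqmem, rfl⟩
    have hdiff : (fun j => (((a i + w).1 j : ℤ))) - (fun j => (((b i + w).1 j : ℤ)))
        = (Pi.single i 1 : Fin d → ℤ) := by
      funext j
      have hfst1 : (a i + w).1 j = (a i).1 j + w.1 j := rfl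
      have hfst2 : (b i + w).1 j = (b i).1 j + w.1 j := rfl
      have := hab1 i j
      simp only [Pi.sub_apply, hfst1, hfst2]
      push_cast
      omega
    have := AddSubgroup.sub_mem _ h1 h2
    rwa [hdiff] at this
  -- conclude: subgroup containing all Pi.single i 1 is ⊤
  rw [eq_top_iff]
  intro z _
  have hz : z = ∑ j : Fin d, z j • (Pi.single j 1 : Fin d → ℤ) := by
    funext k
    rw [Finset.sum_apply]
    simp [Pi.single_apply, Finset.sum_ite_eq']
  rw [hz]
  exact AddSubgroup.sum_mem _ fun j _ => AddSubgroup.zsmul_mem _ (hsingle j) _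
end
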